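/- Let 0 < b < q < 1, set θ = b/q, let α ∈ (0,1), a = θ^α, and r = (1-q)(1-θ). Let f : ℝ → ℝ satisfy f(q) = 0, f(x) ≥ 0 for all x ∈ (q, q+r], and suppose that for every integer n ≥ 2 and every x ∈ K_n = [q + r a^{n-1}, q + r a^{n-2}] one has f(x) ≤ q θ^{n-2}. Then the right derivative of f at q is zero; that is, f(x)/(x - q) tends to 0 as x tends to q from within (q, q+r]. -/
import Mathlib


open Set Filter Topology

/-- Let `0 < b < q < 1`, `θ = b/q`, `α ∈ (0,1)`, `a = θ^α`, `r = (1-q)(1-θ)`.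
If `f q = 0`, `f ≥ 0` on `(q, q+r]`, and for every `n ≥ 2` and
`x ∈ K_n = [q + r a^(n-1), q + r a^(n-2)]` one has `f x ≤ q θ^(n-2)`, then
`f x / (x - q) → 0` as `x → q` from within `(q, q+r]`. -/
theorem right_derivative_zero_at_q
    (b q α : ℝ) (hb : 0 < b) (hbq : b < q) (hq1 : q < 1)
    (hα : α ∈ Set.Ioo (0 : ℝ) 1)
    (f : ℝ → ℝ)
    (θ a r : ℝ) (hθ : θ = b / q) (ha : a = θ ^ α) (hr : r = (1 - q) * (1 - θ))
    (hfq : f q = 0)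
    (hf_nonneg : ∀ x ∈ Set.Ioc q (q + r), 0 ≤ f x)
    (hf_bound : ∀ n : ℕ, 2 ≤ n →
      ∀ x ∈ Set.Icc (q + r * a ^ (n - 1)) (q + r * a ^ (n - 2)),
        f x ≤ q * θ ^ (n - 2)) :
    Tendsto (fun x => f x / (x - q)) (𝓝[Set.Ioc q (q + r)] q) (𝓝 0) := by
  classical
  obtain ⟨hα0, hα1⟩ := hα
  have hq0 : 0 < q := hb.trans hbq
  have hθ0 : 0 < θ := hθ ▸ div_pos hb hq0
  have hθ1 : θ < 1 := hθ ▸ (div_lt_one hq0).2 hbq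
  have ha0 : 0 < a := ha ▸ Real.rpow_pos_of_pos hθ0 α
  have ha1 : a < 1 := ha ▸ Real.rpow_lt_one hθ0.le hθ1 hα0
  have hθa : θ < a := by
    rw [ha]
    nth_rewrite 1 [← Real.rpow_one θ]
    exact Real.rpow_lt_rpow_of_exponent_gt hθ0 hθ1 hα1
  have hr0 : 0 < r := hr ▸ mul_pos (by linarith) (by linarith)
  rw [Metric.tendsto_nhdsWithin_nhds]
  intro ε hε
  have hθa1 : θ / a < 1 := (div_lt_one ha0).2 hθa
  have hθa0 : 0 ≤ θ / a := (div_pos hθ0 ha0).le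
  obtain ⟨N, hN⟩ := exists_pow_lt_of_lt_one
    (div_pos (mul_pos hε (mul_pos ha0 hr0)) hq0) hθa1
  -- hN : (θ/a)^N < ε * (a*r) / q
  refine ⟨r * a ^ N, mul_pos hr0 (pow_pos ha0 N), ?_⟩
  intro x hx hdist
  obtain ⟨hxq, hxr⟩ := hx
  have hx0 : 0 < x - q := sub_pos.2 hxq
  rw [Real.dist_eq, abs_of_pos hx0] at hdist
  -- find minimal m with r * a^m ≤ x - q
  have hexists : ∃ k, r * a ^ k ≤ x - q := by
    obtain ⟨k, hk⟩ := exists_pow_lt_of_lt_one (div_pos hx0 hr0) ha1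
    exact ⟨k, by rw [mul_comm]; exact (le_div_iff₀ hr0).1 hk.le⟩
  set m := Nat.find hexists with hm
  have hspec : r * a ^ m ≤ x - q := Nat.find_spec hexists
  have hNm : N < m := by
    by_contra h
    push_neg at h
    have : a ^ m ≥ a ^ N := pow_le_pow_of_le_one ha0.le ha1.le h
    nlinarith [hspec]
  have hm1 : 1 ≤ m := by omega
  have hmin : x - q < r * a ^ (m - 1) := by
    have := Nat.find_min hexists (m := m - 1) (by omega)
    linarith [not_le.1 this]
  -- apply the bound with n = m + 1
  have hxK : x ∈ Set.Icc (q + r * a ^ ((m + 1) - 1)) (q + r * a ^ ((m + 1) - 2)) := by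
    constructor
    · simp only [Nat.add_sub_cancel]; linarith
    · have : (m + 1) - 2 = m - 1 := by omega
      rw [this]; linarith
  have hfb : f x ≤ q * θ ^ ((m + 1) - 2) := hf_bound (m + 1) (by omega) x hxK
  have hfb' : f x ≤ q * θ ^ (m - 1) := by
    have : (m + 1) - 2 = m - 1 := by omega
    rwa [this] at hfb
  have hfnn : 0 ≤ f x := hf_nonneg x ⟨hxq, hxr⟩
  rw [dist_zero_right, Real.norm_eq_abs, abs_of_nonneg (div_nonneg hfnn hx0.le)]
  -- key estimate: q * θ^(m-1) < ε * (r * a^m)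
  have key : q * θ ^ (m - 1) < ε * (r * a ^ m) := by
    have h1 : (θ / a) ^ (m - 1) ≤ (θ / a) ^ N :=
      pow_le_pow_of_le_one hθa0 hθa1.le (by omega)
    have h2 : (θ / a) ^ (m - 1) < ε * (a * r) / q := lt_of_le_of_lt h1 hN
    have h3 : θ ^ (m - 1) = (θ / a) ^ (m - 1) * a ^ (m - 1) := by
      rw [div_pow, div_mul_cancel₀]
      exact pow_ne_zero _ ha0.ne'
    have h4 : a ^ m = a * a ^ (m - 1) := by
      rw [← pow_succ']
      congr 1
      omega
    have hapow : 0 < a ^ (m - 1) := pow_pos ha0 _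
    calc q * θ ^ (m - 1) = q * (θ / a) ^ (m - 1) * a ^ (m - 1) := by rw [h3]; ring
      _ < q * (ε * (a * r) / q) * a ^ (m - 1) := by
          apply mul_lt_mul_of_pos_right _ hapow
          exact mul_lt_mul_of_pos_left h2 hq0
      _ = ε * (r * (a * a ^ (m - 1))) := by field_simp
      _ = ε * (r * a ^ m) := by rw [← h4]
  have : f x / (x - q) < ε := by
    rw [div_lt_iff₀ hx0]
    calc f x ≤ q * θ ^ (m - 1) := hfb'
      _ < ε * (r * a ^ m) := key
      _ ≤ ε * (x - q) := by
          apply mul_le_mul_of_nonneg_left hspec hε.le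
  exact this
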